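/- For every real α > 0 and every real x > 0, ∑_{m=0}^∞ 1/(m!·Γ(m+α+1))·(x/2)^{2m+α} = (1/(π x Γ(α)))·(x/2)^α · ∫_0^{π/2} ∫_0^π 2·(sin ϑ)^{2α−1}·sin φ · [ sinh(x·cos ϑ·sin φ) + x·cos ϑ·sin φ·cosh(x·cos ϑ·sin φ) ] dφ dϑ. -/

import Mathlib

/-!
Since `sinh t + t cosh t = ∑ (2m+2) t^(2m+1) / (2m+1)!`, integrating termwise against `sin φ`
and using Wallis' formula `∫₀^π sin^(2n) = π (2n)! / (4ⁿ n!²)` turns the inner integral into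
`π ∑ c^(2m+1) / (4ᵐ m!²)` with `c = x cos ϑ`. Integrating termwise once more against
`2 sin^(2α-1) ϑ` produces the Beta integrals
`∫₀^(π/2) cos^(2m+1) sin^(2α-1) = m! Γ(α) / (2 Γ(m+α+1))`, which turn these coefficients into
those of `I_α`. All terms are nonnegative, so both interchanges of sum and integral only need the
summability of the termwise integrals.
-/

open Real MeasureTheory Set

theorem hasSum_integral_of_nonneg {X ι : Type*} [Countable ι] [MeasurableSpace X] {μ : Measure X}
    {f : ι → X → ℝ} {g : X → ℝ} (hf : ∀ i, Integrable (f i) μ) (hf_nonneg : ∀ i, 0 ≤ᵐ[μ] f i)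
    (hg : ∀ᵐ x ∂μ, HasSum (fun i => f i x) (g x)) (hsum : Summable fun i => ∫ x, f i x ∂μ) :
    HasSum (fun i => ∫ x, f i x ∂μ) (∫ x, g x ∂μ) := by
  have hnorm : (fun i => ∫ x, ‖f i x‖ ∂μ) = fun i => ∫ x, f i x ∂μ :=
    funext fun i => integral_congr_ae <| (hf_nonneg i).mono fun x hx => Real.norm_of_nonneg hx
  rw [integral_congr_ae (hg.mono fun x hx => hx.tsum_eq.symm)]
  exact hasSum_integral_of_summable_integral_norm hf (hnorm ▸ hsum)

theorem intervalIntegral.hasSum_integral_of_nonneg {ι : Type*} [Countable ι] {a b : ℝ} (hab : a ≤ b)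
    {f : ι → ℝ → ℝ} {g : ℝ → ℝ} (hf : ∀ i, IntervalIntegrable (f i) volume a b)
    (hf_nonneg : ∀ i, ∀ x ∈ Ioc a b, 0 ≤ f i x)
    (hg : ∀ x ∈ Ioc a b, HasSum (fun i => f i x) (g x))
    (hsum : Summable fun i => ∫ x in a..b, f i x) :
    HasSum (fun i => ∫ x in a..b, f i x) (∫ x in a..b, g x) := by
  simp only [intervalIntegral.integral_of_le hab] at hsum ⊢
  exact _root_.hasSum_integral_of_nonneg (fun i => (hf i).1)
    (fun i => (ae_restrict_iff' measurableSet_Ioc).2 (ae_of_all _ (hf_nonneg i)))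
    ((ae_restrict_iff' measurableSet_Ioc).2 (ae_of_all _ hg)) hsum

theorem Gamma_add_one_mul_factorial_le {α : ℝ} (hα : 0 ≤ α) (m : ℕ) :
    Gamma (α + 1) * m.factorial ≤ Gamma (m + α + 1) := by
  induction m with
  | zero => simp
  | succ m ih =>
    rw [Nat.factorial_succ, Nat.cast_mul, Nat.cast_succ,
      show (m : ℝ) + 1 + α + 1 = m + α + 1 + 1 by ring,
      Gamma_add_one (s := m + α + 1) (by positivity)]
    have hΓ : 0 < Gamma (α + 1) := Gamma_pos_of_pos (by linarith)
    have : 0 ≤ Gamma (α + 1) * m.factorial := by positivity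
    nlinarith

theorem summable_pow_div_factorial_mul_Gamma {α : ℝ} (hα : 0 ≤ α) (y : ℝ) :
    Summable fun m : ℕ => y ^ m / (m.factorial * Gamma (m + α + 1)) := by
  have hΓ : 0 < Gamma (α + 1) := Gamma_pos_of_pos (by linarith)
  refine .of_norm_bounded ((summable_pow_div_factorial |y|).div_const (Gamma (α + 1))) fun m => ?_
  have hm : (1 : ℝ) ≤ m.factorial := by exact_mod_cast m.factorial_pos
  rw [norm_div, norm_pow, Real.norm_eq_abs, Real.norm_of_nonneg (by positivity), div_div]
  gcongr
  calc Gamma (α + 1) ≤ Gamma (α + 1) * m.factorial := le_mul_of_one_le_right hΓ.le hm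
    _ ≤ Gamma (m + α + 1) := Gamma_add_one_mul_factorial_le hα m

theorem hasSum_sinh_add_mul_cosh (t : ℝ) :
    HasSum (fun m : ℕ => (2 * m + 2) * t ^ (2 * m + 1) / (2 * m + 1).factorial)
      (sinh t + t * cosh t) := by
  convert (hasSum_sinh t).add ((hasSum_cosh t).mul_left t) using 2 with m
  rw [Nat.factorial_succ]
  push_cast
  field_simp
  ring

theorem integral_sin_pow_two_mul (n : ℕ) :
    ∫ x in 0..π, sin x ^ (2 * n) = π * (2 * n).factorial / (4 ^ n * (n.factorial : ℝ) ^ 2) := by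
  induction n with
  | zero => simp
  | succ n ih =>
    have hboundary : (sin 0 ^ (2 * n + 1) * cos 0 - sin π ^ (2 * n + 1) * cos π) / ((2 * n : ℕ) + 2)
        = (0 : ℝ) := by
      simp
    rw [mul_add_one, integral_sin_pow, hboundary, zero_add, ih, Nat.factorial_succ (2 * n + 1),
      Nat.factorial_succ (2 * n), Nat.factorial_succ n]
    push_cast
    field_simp
    ring

theorem hasSum_integral_sin_mul_sinh_add_mul_cosh {c : ℝ} (hc : 0 ≤ c) :
    HasSum (fun m : ℕ => π * c ^ (2 * m + 1) / (4 ^ m * (m.factorial : ℝ) ^ 2))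
      (∫ φ in 0..π, sin φ * (sinh (c * sin φ) + c * sin φ * cosh (c * sin φ))) := by
  set f : ℕ → ℝ → ℝ := fun m φ =>
    sin φ * ((2 * m + 2) * (c * sin φ) ^ (2 * m + 1) / (2 * m + 1).factorial)
  have hf_integral (m : ℕ) :
      ∫ φ in 0..π, f m φ = π * c ^ (2 * m + 1) / (4 ^ m * (m.factorial : ℝ) ^ 2) := by
    calc ∫ φ in 0..π, f m φ
        = (2 * m + 2) * c ^ (2 * m + 1) / (2 * m + 1).factorial *
            ∫ φ in 0..π, sin φ ^ (2 * (m + 1)) := by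
          rw [← intervalIntegral.integral_const_mul]
          congr 1 with φ
          ring
      _ = π * c ^ (2 * m + 1) / (4 ^ m * (m.factorial : ℝ) ^ 2) := by
          rw [integral_sin_pow_two_mul, mul_add_one, Nat.factorial_succ (2 * m + 1),
            Nat.factorial_succ m]
          push_cast
          field_simp
          ring
  have hsum : Summable fun m : ℕ => π * c ^ (2 * m + 1) / (4 ^ m * (m.factorial : ℝ) ^ 2) := by
    refine ((summable_pow_div_factorial_mul_Gamma le_rfl (c ^ 2 / 4)).mul_left (π * c)).congr
      fun m => ?_
    rw [add_zero, Gamma_nat_eq_factorial, div_pow, ← pow_mul, pow_succ]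
    field_simp
  simp_rw [← hf_integral] at hsum ⊢
  refine intervalIntegral.hasSum_integral_of_nonneg pi_pos.le
    (fun m => Continuous.intervalIntegrable (by fun_prop) _ _) (fun m φ hφ => ?_)
    (fun φ _ => (hasSum_sinh_add_mul_cosh (c * sin φ)).mul_left (sin φ)) hsum
  have := sin_nonneg_of_nonneg_of_le_pi hφ.1.le hφ.2
  positivity

theorem hasDerivAt_cos_pow_mul_sin_rpow {s t : ℝ} (n : ℕ) (ht : 0 < sin t) :
    HasDerivAt (fun t => cos t ^ (n + 1) * sin t ^ s)
      ((s + n + 1) * (cos t ^ (n + 2) * sin t ^ (s - 1)) - (n + 1) * (cos t ^ n * sin t ^ (s - 1)))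
      t := by
  refine (((hasDerivAt_cos t).pow (n + 1)).mul
    ((hasDerivAt_sin t).rpow_const (p := s) (Or.inl ht.ne'))).congr_deriv ?_
  have hs : sin t ^ s = sin t ^ (s - 1) * sin t := by
    rw [← rpow_add_one ht.ne']; ring_nf
  rw [hs, Pi.pow_apply]
  push_cast
  linear_combination -(n + 1 : ℝ) * cos t ^ n * sin t ^ (s - 1) * cos_sq_add_sin_sq t

theorem hasDerivAt_sin_rpow_div {s t : ℝ} (hs : s ≠ 0) (ht : 0 < sin t) :
    HasDerivAt (fun t => sin t ^ s / s) (cos t * sin t ^ (s - 1)) t :=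
  (((hasDerivAt_sin t).rpow_const (Or.inl ht.ne')).div_const s).congr_deriv (by field_simp)

theorem sin_pos_of_mem_Ioo_zero_pi_div_two {t : ℝ} (ht : t ∈ Ioo 0 (π / 2)) : 0 < sin t :=
  sin_pos_of_pos_of_lt_pi ht.1 (ht.2.trans (by linarith [pi_pos]))

theorem continuous_sin_rpow_div {s : ℝ} (hs : 0 ≤ s) : Continuous fun t => sin t ^ s / s :=
  (continuous_sin.rpow_const fun _ => Or.inr hs).div_const s

theorem intervalIntegrable_cos_mul_sin_rpow {s : ℝ} (hs : 0 < s) :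
    IntervalIntegrable (fun t => cos t * sin t ^ (s - 1)) volume 0 (π / 2) := by
  rw [intervalIntegrable_iff_integrableOn_Ioc_of_le (by positivity)]
  refine intervalIntegral.integrableOn_deriv_of_nonneg (continuous_sin_rpow_div hs.le).continuousOn
    (fun t ht => hasDerivAt_sin_rpow_div hs.ne' (sin_pos_of_mem_Ioo_zero_pi_div_two ht))
    fun t ht => ?_
  have hsin := sin_pos_of_mem_Ioo_zero_pi_div_two ht
  have hcos : 0 < cos t := cos_pos_of_mem_Ioo ⟨by linarith [ht.1, pi_pos], ht.2⟩
  positivity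

theorem intervalIntegrable_cos_pow_succ_mul_sin_rpow {s : ℝ} (hs : 0 < s) (n : ℕ) :
    IntervalIntegrable (fun t => cos t ^ (n + 1) * sin t ^ (s - 1)) volume 0 (π / 2) := by
  simpa only [pow_succ, mul_assoc] using
    (intervalIntegrable_cos_mul_sin_rpow hs).continuousOn_mul (g := fun t => cos t ^ n)
      (by fun_prop)

theorem integral_cos_mul_sin_rpow {s : ℝ} (hs : 0 < s) :
    ∫ t in 0..π / 2, cos t * sin t ^ (s - 1) = 1 / s := by
  rw [intervalIntegral.integral_eq_sub_of_hasDerivAt_of_le (by positivity)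
    (continuous_sin_rpow_div hs.le).continuousOn
    (fun t ht => hasDerivAt_sin_rpow_div hs.ne' (sin_pos_of_mem_Ioo_zero_pi_div_two ht))
    (intervalIntegrable_cos_mul_sin_rpow hs)]
  simp [zero_rpow hs.ne']

theorem integral_cos_pow_add_three_mul_sin_rpow {s : ℝ} (hs : 0 < s) (n : ℕ) :
    (s + n + 2) * ∫ t in 0..π / 2, cos t ^ (n + 3) * sin t ^ (s - 1) =
      (n + 2) * ∫ t in 0..π / 2, cos t ^ (n + 1) * sin t ^ (s - 1) := by
  have hint := intervalIntegrable_cos_pow_succ_mul_sin_rpow hs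
  have hFTC := intervalIntegral.integral_eq_sub_of_hasDerivAt_of_le
    (f := fun t => cos t ^ (n + 1 + 1) * sin t ^ s) (by positivity)
    ((continuous_cos.pow _).mul (continuous_sin.rpow_const fun _ => Or.inr hs.le)).continuousOn
    (fun t ht => hasDerivAt_cos_pow_mul_sin_rpow (n + 1) (sin_pos_of_mem_Ioo_zero_pi_div_two ht))
    (((hint (n + 2)).const_mul _).sub ((hint n).const_mul _))
  have hboundary : cos (π / 2) ^ (n + 1 + 1) * sin (π / 2) ^ s - cos 0 ^ (n + 1 + 1) * sin 0 ^ s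
      = 0 := by
    simp [zero_rpow hs.ne']
  rw [hboundary, intervalIntegral.integral_sub ((hint (n + 2)).const_mul _) ((hint n).const_mul _),
    intervalIntegral.integral_const_mul, intervalIntegral.integral_const_mul] at hFTC
  push_cast at hFTC
  linarith

theorem integral_cos_pow_mul_sin_rpow_eq_Gamma {α : ℝ} (hα : 0 < α) (m : ℕ) :
    ∫ t in 0..π / 2, cos t ^ (2 * m + 1) * sin t ^ (2 * α - 1) =
      m.factorial * Gamma α / (2 * Gamma (m + α + 1)) := by
  induction m with
  | zero =>
    simp only [mul_zero, zero_add, pow_one, Nat.factorial_zero, Nat.cast_one, Nat.cast_zero,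
      one_mul]
    rw [integral_cos_mul_sin_rpow (by positivity), Gamma_add_one hα.ne']
    field_simp
  | succ m ih =>
    have hrec := integral_cos_pow_add_three_mul_sin_rpow (by positivity : 0 < 2 * α) (2 * m)
    rw [ih] at hrec
    push_cast at hrec
    rw [show 2 * (m + 1) + 1 = 2 * m + 3 by ring, Nat.factorial_succ, Nat.cast_mul, Nat.cast_succ,
      show (m : ℝ) + 1 + α + 1 = m + α + 1 + 1 by ring,
      Gamma_add_one (s := m + α + 1) (by positivity)]
    have hΓ : 0 < Gamma (m + α + 1) := Gamma_pos_of_pos (by positivity)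
    rw [eq_div_iff (by positivity)]
    field_simp at hrec
    linear_combination hrec

theorem hasSum_integral_sin_rpow_mul_integral_sinh_add_mul_cosh {α x : ℝ} (hα : 0 < α)
    (hx : 0 ≤ x) :
    HasSum (fun m : ℕ => π * x * Gamma α * ((x / 2) ^ (2 * m) / (m.factorial * Gamma (m + α + 1))))
      (∫ ϑ in 0..π / 2, ∫ φ in 0..π, 2 * sin ϑ ^ (2 * α - 1) * sin φ *
        (sinh (x * cos ϑ * sin φ) + x * cos ϑ * sin φ * cosh (x * cos ϑ * sin φ))) := by
  set f : ℕ → ℝ → ℝ := fun m ϑ => 2 * π * x ^ (2 * m + 1) / (4 ^ m * (m.factorial : ℝ) ^ 2) *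
    (cos ϑ ^ (2 * m + 1) * sin ϑ ^ (2 * α - 1))
  have hf_integral (m : ℕ) : ∫ ϑ in 0..π / 2, f m ϑ =
      π * x * Gamma α * ((x / 2) ^ (2 * m) / (m.factorial * Gamma (m + α + 1))) := by
    rw [intervalIntegral.integral_const_mul, integral_cos_pow_mul_sin_rpow_eq_Gamma hα, div_pow,
      show (4 : ℝ) ^ m = 2 ^ (2 * m) by rw [pow_mul]; norm_num]
    have := Gamma_pos_of_pos (by positivity : 0 < m + α + 1)
    field_simp
    ring
  have hsum : Summable fun m : ℕ =>
      π * x * Gamma α * ((x / 2) ^ (2 * m) / (m.factorial * Gamma (m + α + 1))) :=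
    ((summable_pow_div_factorial_mul_Gamma hα.le ((x / 2) ^ 2)).mul_left (π * x * Gamma α)).congr
      fun m => by rw [pow_mul]
  simp_rw [← hf_integral] at hsum ⊢
  refine intervalIntegral.hasSum_integral_of_nonneg (by positivity)
    (fun m => (intervalIntegrable_cos_pow_succ_mul_sin_rpow (by positivity) (2 * m)).const_mul _)
    (fun m ϑ hϑ => ?_) (fun ϑ hϑ => ?_) hsum
  all_goals have hcos : 0 ≤ cos ϑ := cos_nonneg_of_mem_Icc ⟨by linarith [hϑ.1, pi_pos], hϑ.2⟩
  · have := sin_nonneg_of_nonneg_of_le_pi hϑ.1.le (by linarith [hϑ.2, pi_pos])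
    positivity
  · have hinner : ∫ φ in 0..π, 2 * sin ϑ ^ (2 * α - 1) * sin φ *
          (sinh (x * cos ϑ * sin φ) + x * cos ϑ * sin φ * cosh (x * cos ϑ * sin φ)) =
        2 * sin ϑ ^ (2 * α - 1) * ∫ φ in 0..π, sin φ *
          (sinh (x * cos ϑ * sin φ) + x * cos ϑ * sin φ * cosh (x * cos ϑ * sin φ)) := by
      rw [← intervalIntegral.integral_const_mul]
      congr 1 with φ
      ring
    rw [hinner]
    refine ((hasSum_integral_sin_mul_sinh_add_mul_cosh (mul_nonneg hx hcos)).mul_left _).congr_fun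
      fun m => ?_
    ring

theorem bessel_I_double_integral_representation (α x : ℝ) (hα : 0 < α) (hx : 0 < x) :
    ∑' m : ℕ, 1 / (m.factorial * Real.Gamma (m + α + 1)) *
        (x / 2) ^ (2 * (m : ℝ) + α)
      = (1 / (π * x * Real.Gamma α)) * (x / 2) ^ α *
        ∫ ϑ in (0:ℝ)..(π / 2), ∫ φ in (0:ℝ)..π,
          2 * Real.sin ϑ ^ (2 * α - 1) * Real.sin φ *
            (Real.sinh (x * Real.cos ϑ * Real.sin φ) +
              x * Real.cos ϑ * Real.sin φ * Real.cosh (x * Real.cos ϑ * Real.sin φ)) := by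
  rw [← (hasSum_integral_sin_rpow_mul_integral_sinh_add_mul_cosh hα hx.le).tsum_eq,
    ← tsum_mul_left]
  congr 1 with m
  rw [rpow_add (by positivity), show 2 * (m : ℝ) = ((2 * m : ℕ) : ℝ) by push_cast; ring,
    rpow_natCast]
  have := Gamma_pos_of_pos hα
  field_simp
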